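/- Let X be a quasi-Banach function space over (Ω,μ) such that its Köthe dual X' is saturated, and let 0 < u ∈ X be a weak order unit. Then there exists a weight 0 < w ∈ L^1(Ω) such that for every f ∈ X(u) and every measurable E ⊆ Ω one has ∫_E |f| w dμ < ∞; moreover 1_E ∈ X(u) for every measurable E ⊆ Ω. -/

import Mathlib

open MeasureTheory Filter Set Topology

/-- A quasi-Banach function space over the measure space `(Ω, μ)`:
a complete quasi-normed vector subspace of `L⁰(Ω)` satisfying the
ideal property and the saturation property. -/
structure QBFS {Ω : Type*} [MeasurableSpace Ω] (μ : Measure Ω) where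
  carrier : Set (Ω → ℝ)
  qnorm : (Ω → ℝ) → ℝ
  K : ℝ
  one_le_K : 1 ≤ K
  aemeasurable_mem : ∀ f ∈ carrier, AEMeasurable f μ
  zero_mem : (0 : Ω → ℝ) ∈ carrier
  add_mem : ∀ f ∈ carrier, ∀ g ∈ carrier, f + g ∈ carrier
  smul_mem : ∀ (c : ℝ), ∀ f ∈ carrier, c • f ∈ carrier
  qnorm_nonneg : ∀ f ∈ carrier, 0 ≤ qnorm f
  qnorm_eq_zero_iff : ∀ f ∈ carrier, (qnorm f = 0 ↔ f =ᵐ[μ] 0)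
  qnorm_smul : ∀ (c : ℝ), ∀ f ∈ carrier, qnorm (c • f) = |c| * qnorm f
  qnorm_triangle : ∀ f ∈ carrier, ∀ g ∈ carrier, qnorm (f + g) ≤ K * (qnorm f + qnorm g)
  ideal : ∀ f ∈ carrier, ∀ g : Ω → ℝ, AEMeasurable g μ →
      (∀ᵐ x ∂μ, |g x| ≤ |f x|) → g ∈ carrier ∧ qnorm g ≤ qnorm f
  saturated : ∀ E : Set Ω, MeasurableSet E → 0 < μ E →
      ∃ F, F ⊆ E ∧ MeasurableSet F ∧ 0 < μ F ∧ F.indicator (fun _ => (1 : ℝ)) ∈ carrier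
  complete : ∀ f : ℕ → Ω → ℝ, (∀ n, f n ∈ carrier) →
      (∀ ε > 0, ∃ N, ∀ j ≥ N, ∀ k ≥ N, qnorm (f j - f k) < ε) →
      ∃ g ∈ carrier, Tendsto (fun n => qnorm (f n - g)) atTop (𝓝 0)

namespace QBFS

variable {Ω : Type*} [MeasurableSpace Ω] {μ : Measure Ω}

/-- `X` is a *Banach* function space if its quasi-norm is a norm. -/
def IsBanach (X : QBFS μ) : Prop :=
  ∀ f ∈ X.carrier, ∀ g ∈ X.carrier, X.qnorm (f + g) ≤ X.qnorm f + X.qnorm g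

/-- The Köthe dual `X'` of `X`. -/
def kotheDual (X : QBFS μ) : Set (Ω → ℝ) :=
  {g | AEMeasurable g μ ∧ ∀ f ∈ X.carrier, Integrable (fun x => f x * g x) μ}

/-- The Köthe dual norm `‖g‖_{X'} = sup_{‖f‖_X = 1} ‖fg‖_{L¹}`. -/
noncomputable def dualNorm (X : QBFS μ) (g : Ω → ℝ) : ℝ :=
  sSup ((fun f => ∫ x, |f x * g x| ∂μ) '' {f | f ∈ X.carrier ∧ X.qnorm f = 1})

/-- The Fatou property. -/
def Fatou (X : QBFS μ) : Prop :=
  ∀ (f : ℕ → Ω → ℝ) (g : Ω → ℝ), (∀ n, f n ∈ X.carrier) → AEMeasurable g μ →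
    (∀ᵐ x ∂μ, 0 ≤ f 0 x ∧ Monotone (fun n => f n x) ∧
      Tendsto (fun n => f n x) atTop (𝓝 (g x))) →
    BddAbove (Set.range fun n => X.qnorm (f n)) →
    g ∈ X.carrier ∧ X.qnorm g = ⨆ n, X.qnorm (f n)

/-- Order-continuity: if `f_n ↓ 0` a.e. then `‖f_n‖_X → 0`. -/
def OrderContinuous (X : QBFS μ) : Prop :=
  ∀ f : ℕ → Ω → ℝ, (∀ n, f n ∈ X.carrier) →
    (∀ᵐ x ∂μ, Antitone (fun n => f n x) ∧ Tendsto (fun n => f n x) atTop (𝓝 0)) →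
    Tendsto (fun n => X.qnorm (f n)) atTop (𝓝 0)

end QBFS

open scoped ENNReal

/-!
Every `g ∈ X'` gives a bounded functional `f ↦ ∫ |f g|` on `X`: otherwise there are `hₙ ≥ 0`
with `‖hₙ‖ ≤ (2K)⁻⁽ⁿ⁺¹⁾` and `∫ hₙ |g| = n + 1`, and completeness of `X` produces `H ∈ X`
dominating every partial sum of `∑ hₙ`, so that `∫ |H g| = ∞`. Saturation of `X'` and an
exhaustion argument give sets `Fₙ` with `1_{Fₙ} ∈ X'` covering `Ω` up to a null set; by
boundedness, `v = ∑ cₙ 1_{Fₙ}` lies in `X'` for small enough `cₙ > 0`, and `w = u v` works.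
-/

lemma exists_seq_ae_mem_iUnion {Ω : Type*} [MeasurableSpace Ω] {μ : Measure Ω} [SFinite μ]
    {P : Set Ω → Prop} (hP0 : P ∅) (hPunion : ∀ A B, P A → P B → P (A ∪ B))
    (hPmeas : ∀ A, P A → MeasurableSet A)
    (hsat : ∀ E, MeasurableSet E → 0 < μ E → ∃ F ⊆ E, 0 < μ F ∧ P F) :
    ∃ F : ℕ → Set Ω, (∀ n, P (F n)) ∧ ∀ᵐ x ∂μ, x ∈ ⋃ n, F n := by
  -- a finite measure with the same null sets as `μ`, so that `ν.real` is bounded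
  set ν := μ.toFinite
  set t := sSup (ν.real '' {A | P A})
  have hbdd : BddAbove (ν.real '' {A | P A}) := by
    refine ⟨ν.real univ, ?_⟩
    rintro _ ⟨A, -, rfl⟩
    exact measureReal_mono (subset_univ A)
  have happrox : ∀ n : ℕ, ∃ A, P A ∧ t - 1 / (n + 1) < ν.real A := fun n => by
    obtain ⟨_, ⟨A, hA, rfl⟩, hlt⟩ :=
      exists_lt_of_lt_csSup (s := ν.real '' {A | P A}) ⟨ν.real ∅, ∅, hP0, rfl⟩
      (sub_lt_self t (by positivity : (0 : ℝ) < 1 / (n + 1)))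
    exact ⟨A, hA, hlt⟩
  choose F hF htF using happrox
  refine ⟨F, hF, ?_⟩
  by_contra hnot
  -- a piece of positive measure outside `⋃ n, F n` would push `ν.real (F n ∪ B)` above `t`
  have hU : MeasurableSet (⋃ n, F n) := MeasurableSet.iUnion fun n => hPmeas _ (hF n)
  obtain ⟨B, hBU, hBpos, hB⟩ :=
    hsat _ hU.compl (pos_iff_ne_zero.2 fun h => hnot (ae_iff.2 h))
  have hνB : 0 < ν.real B :=
    ENNReal.toReal_pos (fun h => hBpos.ne' (absolutelyContinuous_toFinite μ h)) (measure_ne_top ν B)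
  obtain ⟨n, hn⟩ := exists_nat_one_div_lt hνB
  have hdisj : Disjoint (F n) B :=
    Set.disjoint_left.2 fun x hxF hxB => hBU hxB (mem_iUnion_of_mem n hxF)
  have hle := le_csSup hbdd ⟨_, hPunion _ _ (hF n) hB, rfl⟩
  rw [measureReal_union hdisj (hPmeas B hB)] at hle
  linarith [htF n]

namespace QBFS

variable {Ω : Type*} [MeasurableSpace Ω] {μ : Measure Ω} (X : QBFS μ)

lemma qnorm_zero : X.qnorm 0 = 0 := by
  simpa using X.qnorm_smul 0 0 X.zero_mem

lemma sub_mem {f g : Ω → ℝ} (hf : f ∈ X.carrier) (hg : g ∈ X.carrier) : f - g ∈ X.carrier := by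
  simpa [sub_eq_add_neg] using X.add_mem f hf _ (X.smul_mem (-1) g hg)

lemma qnorm_sub_comm {f g : Ω → ℝ} (hf : f ∈ X.carrier) (hg : g ∈ X.carrier) :
    X.qnorm (f - g) = X.qnorm (g - f) := by
  simpa using X.qnorm_smul (-1) (g - f) (X.sub_mem hg hf)

lemma sum_mem {ι : Type*} {s : Finset ι} {g : ι → Ω → ℝ} (hg : ∀ i ∈ s, g i ∈ X.carrier) :
    ∑ i ∈ s, g i ∈ X.carrier :=
  Finset.sum_induction g (· ∈ X.carrier) (fun f g hf hg => X.add_mem f hf g hg) X.zero_mem hg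

lemma abs_mem {f : Ω → ℝ} (hf : f ∈ X.carrier) :
    (fun x => |f x|) ∈ X.carrier ∧ X.qnorm (fun x => |f x|) ≤ X.qnorm f :=
  X.ideal f hf _ (X.aemeasurable_mem f hf).abs (ae_of_all _ fun x => (abs_abs (f x)).le)

lemma indicator_mem {f : Ω → ℝ} (hf : f ∈ X.carrier) {E : Set Ω} (hE : MeasurableSet E) :
    E.indicator f ∈ X.carrier :=
  (X.ideal f hf _ ((X.aemeasurable_mem f hf).indicator hE)
    (ae_of_all _ fun x => by simpa only [Real.norm_eq_abs] using norm_indicator_le_norm_self f x)).1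

lemma qnorm_sum_range_le (m : ℕ) {g : ℕ → Ω → ℝ} (hg : ∀ n, g n ∈ X.carrier) :
    X.qnorm (∑ i ∈ Finset.range m, g i) ≤
      ∑ i ∈ Finset.range m, X.K ^ (i + 1) * X.qnorm (g i) := by
  induction m generalizing g with
  | zero => simp [qnorm_zero]
  | succ m ih =>
    have hK : 0 ≤ X.K := zero_le_one.trans X.one_le_K
    rw [Finset.sum_range_succ', Finset.sum_range_succ', add_comm, add_comm (∑ _ ∈ _, _)]
    calc X.qnorm (g 0 + ∑ i ∈ Finset.range m, g (i + 1))
        ≤ X.K * (X.qnorm (g 0) + X.qnorm (∑ i ∈ Finset.range m, g (i + 1))) :=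
          X.qnorm_triangle _ (hg 0) _ (X.sum_mem fun i _ => hg (i + 1))
      _ ≤ X.K * (X.qnorm (g 0) + ∑ i ∈ Finset.range m, X.K ^ (i + 1) * X.qnorm (g (i + 1))) :=
          mul_le_mul_of_nonneg_left (add_le_add_right (ih fun n => hg (n + 1)) _) hK
      _ = X.K ^ (0 + 1) * X.qnorm (g 0) +
            ∑ i ∈ Finset.range m, X.K ^ (i + 1 + 1) * X.qnorm (g (i + 1)) := by
          rw [mul_add, Finset.mul_sum]
          congr 1
          · ring
          · exact Finset.sum_congr rfl fun i _ => by ring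

lemma qnorm_sum_range_shift_le {g : ℕ → Ω → ℝ} (hg : ∀ n, g n ∈ X.carrier)
    (hgn : ∀ n, X.qnorm (g n) ≤ ((2 * X.K) ^ (n + 1))⁻¹) (M m : ℕ) :
    X.qnorm (∑ j ∈ Finset.range m, g (M + j)) ≤ (1 / 2) ^ M := by
  have hK : 1 ≤ X.K := X.one_le_K
  have hterm : ∀ j, X.K ^ (j + 1) * X.qnorm (g (M + j)) ≤ (1 / 2) ^ (M + 1) * (1 / 2) ^ j := by
    intro j
    calc X.K ^ (j + 1) * X.qnorm (g (M + j))
        ≤ X.K ^ (j + 1) * ((2 * X.K) ^ (M + j + 1))⁻¹ :=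
          mul_le_mul_of_nonneg_left (hgn _) (by positivity)
      _ = (1 / 2) ^ (M + 1) * (1 / 2) ^ j * (X.K ^ M)⁻¹ := by
          have : X.K ≠ 0 := by positivity
          simp only [one_div, inv_pow]
          field_simp
          ring
      _ ≤ (1 / 2) ^ (M + 1) * (1 / 2) ^ j :=
          mul_le_of_le_one_right (by positivity) (inv_le_one_of_one_le₀ (one_le_pow₀ hK))
  calc X.qnorm (∑ j ∈ Finset.range m, g (M + j))
      ≤ ∑ j ∈ Finset.range m, X.K ^ (j + 1) * X.qnorm (g (M + j)) :=
        X.qnorm_sum_range_le m fun j => hg (M + j)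
    _ ≤ (1 / 2) ^ (M + 1) * ∑ j ∈ Finset.range m, (1 / 2) ^ j := by
        rw [Finset.mul_sum]
        exact Finset.sum_le_sum fun j _ => hterm j
    _ ≤ (1 / 2) ^ (M + 1) * 2 := by gcongr; exact sum_geometric_two_le m
    _ = (1 / 2) ^ M := by ring

lemma ae_le_of_tendsto_qnorm_sub {S : ℕ → Ω → ℝ} (hS : ∀ n, S n ∈ X.carrier) (hmono : Monotone S)
    {H : Ω → ℝ} (hH : H ∈ X.carrier) (hlim : Tendsto (fun n => X.qnorm (S n - H)) atTop (𝓝 0))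
    (n : ℕ) : S n ≤ᵐ[μ] H := by
  set p : Ω → ℝ := fun x => max (S n x - H x) 0
  have hp : ∀ m ≥ n, p ∈ X.carrier ∧ X.qnorm p ≤ X.qnorm (S m - H) := fun m hm =>
    X.ideal _ (X.sub_mem (hS m) hH) p
      (((X.aemeasurable_mem _ (hS n)).sub (X.aemeasurable_mem _ hH)).max aemeasurable_const)
      (ae_of_all _ fun x => by
        rw [abs_of_nonneg (le_max_right _ _)]
        exact max_le ((sub_le_sub_right (hmono hm x) _).trans (le_abs_self _)) (abs_nonneg _))
  have hp0 : X.qnorm p = 0 :=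
    le_antisymm (ge_of_tendsto hlim (eventually_atTop.2 ⟨n, fun m hm => (hp m hm).2⟩))
      (X.qnorm_nonneg p (hp n le_rfl).1)
  filter_upwards [(X.qnorm_eq_zero_iff p (hp n le_rfl).1).1 hp0] with x hx
  simpa [p] using hx

lemma exists_ae_sum_range_le {g : ℕ → Ω → ℝ} (hg : ∀ n, g n ∈ X.carrier) (hg0 : ∀ n, 0 ≤ g n)
    (hgn : ∀ n, X.qnorm (g n) ≤ ((2 * X.K) ^ (n + 1))⁻¹) :
    ∃ H ∈ X.carrier, ∀ n, ∑ i ∈ Finset.range n, g i ≤ᵐ[μ] H := by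
  set S : ℕ → Ω → ℝ := fun n => ∑ i ∈ Finset.range n, g i
  have hS : ∀ n, S n ∈ X.carrier := fun n => X.sum_mem fun i _ => hg i
  have hSmono : Monotone S := fun m n hmn =>
    Finset.sum_le_sum_of_subset_of_nonneg (Finset.range_mono hmn) fun i _ _ => hg0 i
  have htail : ∀ M N, M ≤ N → X.qnorm (S N - S M) ≤ (1 / 2) ^ M := by
    intro M N hMN
    obtain ⟨m, rfl⟩ := Nat.exists_eq_add_of_le hMN
    simpa [S, Finset.sum_range_add] using X.qnorm_sum_range_shift_le hg hgn M m
  have hcauchy : ∀ ε > 0, ∃ N, ∀ j ≥ N, ∀ k ≥ N, X.qnorm (S j - S k) < ε := by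
    intro ε hε
    obtain ⟨N, hN⟩ := exists_pow_lt_of_lt_one hε (by norm_num : (1 / 2 : ℝ) < 1)
    have hsmall : ∀ M ≥ N, (1 / 2 : ℝ) ^ M < ε := fun M hM =>
      (pow_le_pow_of_le_one (by norm_num) (by norm_num) hM).trans_lt hN
    refine ⟨N, fun j hj k hk => ?_⟩
    rcases le_total j k with hjk | hkj
    · rw [X.qnorm_sub_comm (hS j) (hS k)]
      exact (htail j k hjk).trans_lt (hsmall j hj)
    · exact (htail k j hkj).trans_lt (hsmall k hk)
  obtain ⟨H, hH, hlim⟩ := X.complete S hS hcauchy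
  exact ⟨H, hH, X.ae_le_of_tendsto_qnorm_sub hS hSmono hH hlim⟩

lemma zero_mem_kotheDual : (0 : Ω → ℝ) ∈ X.kotheDual :=
  ⟨aemeasurable_const, fun f _ => by simp⟩

lemma add_mem_kotheDual {g h : Ω → ℝ} (hg : g ∈ X.kotheDual) (hh : h ∈ X.kotheDual) :
    g + h ∈ X.kotheDual :=
  ⟨hg.1.add hh.1, fun f hf =>
    ((hg.2 f hf).add (hh.2 f hf)).congr (ae_of_all _ fun x => by simp [mul_add])⟩

lemma mem_kotheDual_of_abs_le {g h : Ω → ℝ} (hg : g ∈ X.kotheDual) (hh : AEMeasurable h μ)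
    (hle : ∀ᵐ x ∂μ, |h x| ≤ |g x|) : h ∈ X.kotheDual := by
  refine ⟨hh, fun f hf =>
    (hg.2 f hf).mono ((X.aemeasurable_mem f hf).mul hh).aestronglyMeasurable ?_⟩
  filter_upwards [hle] with x hx
  simp only [Real.norm_eq_abs, abs_mul]
  exact mul_le_mul_of_nonneg_left hx (abs_nonneg _)

lemma indicator_union_mem_kotheDual {A B : Set Ω} (hA : MeasurableSet A) (hB : MeasurableSet B)
    (hA' : A.indicator (fun _ => (1 : ℝ)) ∈ X.kotheDual)
    (hB' : B.indicator (fun _ => (1 : ℝ)) ∈ X.kotheDual) :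
    (A ∪ B).indicator (fun _ => (1 : ℝ)) ∈ X.kotheDual := by
  refine X.mem_kotheDual_of_abs_le (X.add_mem_kotheDual hA' hB')
    (aemeasurable_const.indicator (hA.union hB)) (ae_of_all _ fun x => ?_)
  by_cases hxA : x ∈ A <;> by_cases hxB : x ∈ B <;> norm_num [hxA, hxB]

lemma integral_abs_mul_le_of_abs_le {g h H : Ω → ℝ} (hg : g ∈ X.kotheDual) (hh : h ∈ X.carrier)
    (hH : H ∈ X.carrier) (hle : ∀ᵐ x ∂μ, |h x| ≤ |H x|) :
    ∫ x, |h x * g x| ∂μ ≤ ∫ x, |H x * g x| ∂μ :=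
  integral_mono_ae (hg.2 h hh).abs (hg.2 H hH).abs (hle.mono fun x hx => by
    simp only [abs_mul]
    exact mul_le_mul_of_nonneg_right hx (abs_nonneg _))

lemma exists_integral_abs_mul_le {g : Ω → ℝ} (hg : g ∈ X.kotheDual) :
    ∃ C, 0 ≤ C ∧ ∀ f ∈ X.carrier, ∫ x, |f x * g x| ∂μ ≤ C * X.qnorm f := by
  by_contra! hunb
  have hK : 0 < X.K := zero_lt_one.trans_le X.one_le_K
  choose f hf hlt using fun n : ℕ =>
    hunb ((n + 1) * (2 * X.K) ^ (n + 1)) (by positivity)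
  set I : ℕ → ℝ := fun n => ∫ x, |f n x * g x| ∂μ
  have hI : ∀ n, 0 < I n := fun n =>
    (mul_nonneg (by positivity) (X.qnorm_nonneg _ (hf n))).trans_lt (hlt n)
  set h : ℕ → Ω → ℝ := fun n x => (n + 1) / I n * |f n x|
  have hh : ∀ n, h n ∈ X.carrier := fun n => X.smul_mem _ _ (X.abs_mem (hf n)).1
  have hh0 : ∀ n, 0 ≤ h n := fun n x => by positivity
  have hc : ∀ n : ℕ, 0 ≤ (n + 1 : ℝ) / I n := fun n => div_nonneg (by positivity) (hI n).le
  have hhn : ∀ n, X.qnorm (h n) ≤ ((2 * X.K) ^ (n + 1))⁻¹ := by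
    intro n
    calc X.qnorm (h n) = (n + 1) / I n * X.qnorm (fun x => |f n x|) := by
          rw [← abs_of_nonneg (hc n)]
          exact X.qnorm_smul _ _ (X.abs_mem (hf n)).1
      _ ≤ (n + 1) / I n * X.qnorm (f n) := mul_le_mul_of_nonneg_left (X.abs_mem (hf n)).2 (hc n)
      _ ≤ ((2 * X.K) ^ (n + 1))⁻¹ := by
          rw [div_mul_eq_mul_div, div_le_iff₀ (hI n), ← div_eq_inv_mul,
            le_div_iff₀ (by positivity)]
          linarith [hlt n]
  have hhg : ∀ n, ∫ x, |h n x * g x| ∂μ = n + 1 := by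
    intro n
    calc ∫ x, |h n x * g x| ∂μ = ∫ x, (n + 1) / I n * |f n x * g x| ∂μ := by
          congr 1 with x
          simp only [h, abs_mul, abs_abs, abs_of_nonneg (hc n)]
          ring
      _ = (n + 1) / I n * I n := integral_const_mul _ _
      _ = n + 1 := div_mul_cancel₀ _ (hI n).ne'
  obtain ⟨H, hH, hdom⟩ := X.exists_ae_sum_range_le hh hh0 hhn
  have hHg : ∀ n : ℕ, (n : ℝ) + 1 ≤ ∫ x, |H x * g x| ∂μ := by
    intro n
    refine hhg n ▸ X.integral_abs_mul_le_of_abs_le hg (hh n) hH ?_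
    filter_upwards [hdom (n + 1)] with x hx
    rw [abs_of_nonneg (hh0 n x)]
    exact ((Finset.single_le_sum (fun i _ => hh0 i x) (Finset.self_mem_range_succ n)).trans
      (by simpa using hx)).trans (le_abs_self _)
  obtain ⟨n, hn⟩ := exists_nat_gt (∫ x, |H x * g x| ∂μ)
  linarith [hHg n]

lemma const_mul_mem_kotheDual (c : ℝ) {g : Ω → ℝ} (hg : g ∈ X.kotheDual) :
    (fun x => c * g x) ∈ X.kotheDual :=
  ⟨hg.1.const_mul c, fun f hf =>
    ((hg.2 f hf).const_mul c).congr (ae_of_all _ fun x => by ring)⟩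

lemma tsum_mem_kotheDual {g : ℕ → Ω → ℝ} (hg : ∀ n, g n ∈ X.kotheDual) (hg0 : ∀ n, 0 ≤ g n)
    (hsum : ∀ x, Summable fun n => g n x) {a : ℕ → ℝ} (ha0 : ∀ n, 0 ≤ a n) (ha : Summable a)
    (hbound : ∀ n, ∀ f ∈ X.carrier, ∫ x, |f x * g n x| ∂μ ≤ a n * X.qnorm f) :
    (fun x => ∑' n, g n x) ∈ X.kotheDual := by
  have hv0 : ∀ x, 0 ≤ ∑' n, g n x := fun x => tsum_nonneg (hg0 · x)
  have hvmeas : AEMeasurable (fun x => ∑' n, g n x) μ := AEMeasurable.tsum fun n => (hg n).1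
  refine ⟨hvmeas, fun f hf => ⟨((X.aemeasurable_mem f hf).mul hvmeas).aestronglyMeasurable, ?_⟩⟩
  have hpt : ∀ x, ‖f x * ∑' n, g n x‖ₑ = ∑' n, ‖f x * g n x‖ₑ := fun x => by
    rw [enorm_mul, Real.enorm_of_nonneg (hv0 x), ENNReal.ofReal_tsum_of_nonneg (hg0 · x) (hsum x),
      ← ENNReal.tsum_mul_left]
    congr 1 with n
    rw [enorm_mul, Real.enorm_of_nonneg (hg0 n x)]
  have hterm : ∀ n, ∫⁻ x, ‖f x * g n x‖ₑ ∂μ ≤ ENNReal.ofReal (a n * X.qnorm f) := fun n => by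
    rw [← ofReal_integral_norm_eq_lintegral_enorm ((hg n).2 f hf)]
    exact ENNReal.ofReal_le_ofReal (hbound n f hf)
  have hmeas : ∀ n, AEMeasurable (fun x => ‖f x * g n x‖ₑ) μ := fun n =>
    ((X.aemeasurable_mem f hf).mul (hg n).1).enorm
  calc ∫⁻ x, ‖f x * ∑' n, g n x‖ₑ ∂μ = ∑' n, ∫⁻ x, ‖f x * g n x‖ₑ ∂μ := by
        rw [lintegral_congr hpt, lintegral_tsum hmeas]
    _ ≤ ∑' n, ENNReal.ofReal (a n * X.qnorm f) := ENNReal.tsum_le_tsum hterm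
    _ = ENNReal.ofReal (∑' n, a n * X.qnorm f) :=
        (ENNReal.ofReal_tsum_of_nonneg (fun n => mul_nonneg (ha0 n) (X.qnorm_nonneg f hf))
          (ha.mul_right _)).symm
    _ < ∞ := ENNReal.ofReal_lt_top

lemma exists_nonneg_mem_kotheDual_pos_of_seq {g : ℕ → Ω → ℝ} (hg : ∀ n, g n ∈ X.kotheDual)
    (hg0 : ∀ n, 0 ≤ g n) (hg1 : ∀ n, g n ≤ 1) :
    ∃ v ∈ X.kotheDual, 0 ≤ v ∧ ∀ n x, 0 < g n x → 0 < v x := by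
  choose C hC0 hC using fun n => X.exists_integral_abs_mul_le (hg n)
  set c : ℕ → ℝ := fun n => ((2 : ℝ) ^ n * (1 + C n))⁻¹
  have hc0 : ∀ n, 0 < c n := fun n => inv_pos.2 (mul_pos (by positivity) (by linarith [hC0 n]))
  have hcC : ∀ n, c n + c n * C n = (1 / 2) ^ n := fun n => by
    rw [← mul_one_add]
    simp only [c]
    rw [mul_inv, mul_assoc, inv_mul_cancel₀ (by linarith [hC0 n]), mul_one, one_div, inv_pow]
  have hterm0 : ∀ n x, 0 ≤ c n * g n x := fun n x => mul_nonneg (hc0 n).le (hg0 n x)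
  have hsum : ∀ x, Summable fun n => c n * g n x := fun x =>
    Summable.of_nonneg_of_le (hterm0 · x) (fun n =>
      (mul_le_of_le_one_right (hc0 n).le (hg1 n x)).trans
        (by linarith [hcC n, mul_nonneg (hc0 n).le (hC0 n)])) summable_geometric_two
  have hbound : ∀ n, ∀ f ∈ X.carrier,
      ∫ x, |f x * (c n * g n x)| ∂μ ≤ (1 / 2) ^ n * X.qnorm f := fun n f hf =>
    calc ∫ x, |f x * (c n * g n x)| ∂μ = c n * ∫ x, |f x * g n x| ∂μ := by
          rw [← integral_const_mul]
          congr 1 with x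
          rw [mul_left_comm, abs_mul, abs_of_pos (hc0 n)]
      _ ≤ c n * (C n * X.qnorm f) := mul_le_mul_of_nonneg_left (hC n f hf) (hc0 n).le
      _ ≤ (1 / 2) ^ n * X.qnorm f := by
          rw [← hcC n]
          linarith [mul_nonneg (hc0 n).le (X.qnorm_nonneg f hf)]
  refine ⟨_, X.tsum_mem_kotheDual (fun n => X.const_mul_mem_kotheDual (c n) (hg n))
      (fun n => hterm0 n) hsum (fun n => by positivity) summable_geometric_two hbound,
    fun x => tsum_nonneg (hterm0 · x), fun n x hx =>
    (mul_pos (hc0 n) hx).trans_le ((hsum x).le_tsum n fun m _ => hterm0 m x)⟩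

lemma exists_pos_mem_kotheDual [SFinite μ]
    (hsat : ∀ E : Set Ω, MeasurableSet E → 0 < μ E →
      ∃ F, F ⊆ E ∧ MeasurableSet F ∧ 0 < μ F ∧ F.indicator (fun _ => (1 : ℝ)) ∈ X.kotheDual) :
    ∃ v ∈ X.kotheDual, 0 ≤ v ∧ ∀ᵐ x ∂μ, 0 < v x := by
  obtain ⟨F, hF, hcover⟩ := exists_seq_ae_mem_iUnion (μ := μ)
    (P := fun A => MeasurableSet A ∧ A.indicator (fun _ => (1 : ℝ)) ∈ X.kotheDual)
    ⟨.empty, by rw [indicator_empty]; exact X.zero_mem_kotheDual⟩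
    (fun A B hA hB => ⟨hA.1.union hB.1, X.indicator_union_mem_kotheDual hA.1 hB.1 hA.2 hB.2⟩)
    (fun A hA => hA.1)
    (fun E hE hE0 => by
      obtain ⟨F, hFE, hF, hF0, hF'⟩ := hsat E hE hE0
      exact ⟨F, hFE, hF0, hF, hF'⟩)
  obtain ⟨v, hv, hv0, hvpos⟩ := X.exists_nonneg_mem_kotheDual_pos_of_seq
    (g := fun n => (F n).indicator fun _ => 1) (fun n => (hF n).2)
    (fun n => indicator_nonneg fun _ _ => zero_le_one)
    (fun n => indicator_le_self' fun _ _ => zero_le_one)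
  refine ⟨v, hv, hv0, ?_⟩
  filter_upwards [hcover] with x hx
  obtain ⟨n, hn⟩ := mem_iUnion.1 hx
  exact hvpos n x (by simp [hn])

end QBFS

/-- If the Köthe dual `X'` is saturated and `u` is a weak order unit of `X`,
then there is a weight `0 < w ∈ L¹(Ω)` such that every `f ∈ X(u)` satisfies
`∫_E |f| w dμ < ∞` for all measurable `E`; moreover `1_E ∈ X(u)` for all
measurable `E`. -/
theorem weak_order_unit_weight
    {Ω : Type*} [MeasurableSpace Ω] {μ : Measure Ω} [SigmaFinite μ]
    (X : QBFS μ)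
    (hsat : ∀ E : Set Ω, MeasurableSet E → 0 < μ E →
      ∃ F, F ⊆ E ∧ MeasurableSet F ∧ 0 < μ F ∧
        F.indicator (fun _ => (1 : ℝ)) ∈ X.kotheDual)
    (u : Ω → ℝ) (hu : u ∈ X.carrier) (hupos : ∀ᵐ x ∂μ, 0 < u x) :
    (∃ w : Ω → ℝ, AEMeasurable w μ ∧ (∀ᵐ x ∂μ, 0 < w x) ∧ Integrable w μ ∧
      ∀ f : Ω → ℝ, AEMeasurable f μ → (fun x => f x * u x) ∈ X.carrier →
        ∀ E : Set Ω, MeasurableSet E →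
          IntegrableOn (fun x => |f x| * w x) E μ) ∧
    ∀ E : Set Ω, MeasurableSet E → (fun x => E.indicator u x) ∈ X.carrier := by
  refine ⟨?_, fun E hE => X.indicator_mem hu hE⟩
  obtain ⟨v, hv, hv0, hvpos⟩ := X.exists_pos_mem_kotheDual hsat
  refine ⟨fun x => u x * v x, (X.aemeasurable_mem u hu).mul hv.1, ?_, hv.2 u hu, ?_⟩
  · filter_upwards [hupos, hvpos] with x hux hvx using mul_pos hux hvx
  · intro f _ hfu E _
    refine ((hv.2 _ hfu).abs.congr ?_).integrableOn
    filter_upwards [hupos] with x hx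
    rw [abs_mul, abs_mul, abs_of_pos hx, abs_of_nonneg (hv0 x), mul_assoc]
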